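/- For polynomial G(p) = Σ_{k=0}^h p^k Γ_k, the block Loewner matrix 𝕃 satisfies rank(𝕃) ≤ Σ_{k=0}^h rank(Γ_k)·rank(Ξ_k), where Ξ_k is the block matrix whose (i,j)-th block is ((π_i^k − φ_j^k)/(π_i − φ_j))·𝟙_{m,n}. -/

import Mathlib

/-!
Expanding `G(π i) - G(φ j)` monomial by monomial writes `𝕃` as `∑ₖ Γ̃ₖ ⊙ Ξₖ`, where `Γ̃ₖ`
repeats `Γₖ` in every block, so `rank Γ̃ₖ ≤ rank Γₖ`. The Hadamard product bound holds because
every column of `A ⊙ B` is a pointwise product of a column of `A` and a column of `B`, so the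
column space of `A ⊙ B` lies in the product of the two column spaces, which is spanned by products
of basis vectors. Subadditivity of rank finishes the proof.
-/

open Matrix Module Submodule

theorem Submodule.span_range_coe_basis {K V ι : Type*} [Semiring K] [AddCommMonoid V] [Module K V]
    (U : Submodule K V) (b : Basis ι K U) : span K (Set.range fun i => (b i : V)) = U := by
  rw [Set.range_comp' Subtype.val b, ← Submodule.coe_subtype, Submodule.span_image, b.span_eq,
    Submodule.map_subtype_top]

theorem Submodule.finrank_mul_le {K A : Type*} [Field K] [Ring A] [Algebra K A]
    (U W : Submodule K A) [FiniteDimensional K U] [FiniteDimensional K W] :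
    finrank K ↥(U * W) ≤ finrank K U * finrank K W := by
  set u := fun i => (finBasis K U i : A)
  set w := fun j => (finBasis K W j : A)
  calc finrank K ↥(U * W) = finrank K ↥(span K (Set.range fun p : _ × _ => u p.1 * w p.2)) := by
        rw [← Set.image2_range, Set.image2_mul, ← span_mul_span, U.span_range_coe_basis,
          W.span_range_coe_basis]
    _ ≤ finrank K U * finrank K W := by
        simpa [Set.finrank] using finrank_range_le_card (R := K) fun p : _ × _ => u p.1 * w p.2

namespace Matrix

variable {K α β : Type*} [Field K] [Fintype β]

theorem rank_add_le (A B : Matrix α β K) : (A + B).rank ≤ A.rank + B.rank := by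
  have hrange : LinearMap.range (A + B).mulVecLin ≤
      LinearMap.range A.mulVecLin ⊔ LinearMap.range B.mulVecLin := by
    rw [mulVecLin_add]
    rintro _ ⟨x, rfl⟩
    exact add_mem_sup (LinearMap.mem_range_self _ x) (LinearMap.mem_range_self _ x)
  exact (Submodule.finrank_mono hrange).trans (finrank_add_le_finrank_add_finrank _ _)

theorem rank_sum_le {ι : Type*} (s : Finset ι) (A : ι → Matrix α β K) :
    (∑ i ∈ s, A i).rank ≤ ∑ i ∈ s, (A i).rank := by
  classical
  induction s using Finset.induction_on with
  | empty => simp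
  | insert i s hi ih =>
    rw [Finset.sum_insert hi, Finset.sum_insert hi]
    exact (rank_add_le _ _).trans (Nat.add_le_add_left ih _)

theorem range_mulVecLin_hadamard_le (A B : Matrix α β K) :
    LinearMap.range (A ⊙ B).mulVecLin ≤
      LinearMap.range A.mulVecLin * LinearMap.range B.mulVecLin := by
  rw [range_mulVecLin, range_mulVecLin, range_mulVecLin, span_mul_span]
  refine span_mono ?_
  rintro _ ⟨j, rfl⟩
  exact Set.mul_mem_mul ⟨j, rfl⟩ ⟨j, rfl⟩

theorem rank_hadamard_le [Fintype α] (A B : Matrix α β K) : (A ⊙ B).rank ≤ A.rank * B.rank :=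
  (Submodule.finrank_mono (range_mulVecLin_hadamard_le A B)).trans
    (Submodule.finrank_mul_le _ _)

end Matrix

open Finset in
theorem loewner_eq_sum_hadamard {M N m n h : ℕ}
    {Γ : ℕ → Matrix (Fin m) (Fin n) ℝ} {π : Fin M → ℝ} {φ : Fin N → ℝ}
    {L : Matrix (Fin M × Fin m) (Fin N × Fin n) ℝ}
    {Ξ : ℕ → Matrix (Fin M × Fin m) (Fin N × Fin n) ℝ}
    (hL : ∀ i j a b, L (i, a) (j, b) =
      (π i - φ j)⁻¹ * (((∑ k ∈ range (h + 1), π i ^ k • Γ k)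
        - ∑ k ∈ range (h + 1), φ j ^ k • Γ k) a b))
    (hΞ : ∀ k i j a b, Ξ k (i, a) (j, b) = (π i ^ k - φ j ^ k) / (π i - φ j)) :
    L = ∑ k ∈ range (h + 1), (Γ k).submatrix Prod.snd Prod.snd ⊙ Ξ k := by
  ext ⟨i, a⟩ ⟨j, b⟩
  simp only [hL, hΞ, Matrix.sum_apply, Matrix.hadamard_apply, Matrix.submatrix_apply,
    Matrix.sub_apply, Matrix.smul_apply, smul_eq_mul, ← sum_sub_distrib, mul_sum]
  refine sum_congr rfl fun k _ => ?_
  ring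

theorem polynomial_loewner_rank_le_general (M N m n h : ℕ)
    (Γ : ℕ → Matrix (Fin m) (Fin n) ℝ) (π : Fin M → ℝ) (φ : Fin N → ℝ)
    (L : Matrix (Fin M × Fin m) (Fin N × Fin n) ℝ)
    (Ξ : ℕ → Matrix (Fin M × Fin m) (Fin N × Fin n) ℝ)
    (hL : ∀ i j a b, L (i, a) (j, b) =
      (π i - φ j)⁻¹ * (((∑ k ∈ Finset.range (h + 1), π i ^ k • Γ k)
        - ∑ k ∈ Finset.range (h + 1), φ j ^ k • Γ k) a b))
    (hΞ : ∀ k i j a b, Ξ k (i, a) (j, b) = (π i ^ k - φ j ^ k) / (π i - φ j)) :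
    L.rank ≤ ∑ k ∈ Finset.range (h + 1), (Γ k).rank * (Ξ k).rank := by
  rw [loewner_eq_sum_hadamard hL hΞ]
  refine (Matrix.rank_sum_le _ _).trans (Finset.sum_le_sum fun k _ => ?_)
  calc ((Γ k).submatrix Prod.snd Prod.snd ⊙ Ξ k).rank
      ≤ ((Γ k).submatrix Prod.snd Prod.snd).rank * (Ξ k).rank := Matrix.rank_hadamard_le _ _
    _ ≤ (Γ k).rank * (Ξ k).rank := Nat.mul_le_mul_right _ (Matrix.rank_submatrix_le _ _ _)

/-- For polynomial `G p = ∑_{k=0}^h p^k • Γ k`, the block Loewner matrix `𝕃` satisfies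
`rank 𝕃 ≤ ∑_{k=0}^h rank (Γ k) * rank (Ξ k)`, where `Ξ k` has `(i,j)`-th block
`((π i ^ k - φ j ^ k) / (π i - φ j)) • 𝟙_{m,n}`. -/
theorem polynomial_loewner_rank_le (M N m n h : ℕ)
    (Γ : ℕ → Matrix (Fin m) (Fin n) ℝ) (π : Fin M → ℝ) (φ : Fin N → ℝ)
    (hπφ : ∀ i j, π i ≠ φ j)
    (L : Matrix (Fin M × Fin m) (Fin N × Fin n) ℝ)
    (Ξ : ℕ → Matrix (Fin M × Fin m) (Fin N × Fin n) ℝ)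
    (hL : ∀ i j a b, L (i, a) (j, b) =
      (π i - φ j)⁻¹ * (((∑ k ∈ Finset.range (h + 1), π i ^ k • Γ k)
        - ∑ k ∈ Finset.range (h + 1), φ j ^ k • Γ k) a b))
    (hΞ : ∀ k i j a b, Ξ k (i, a) (j, b) = (π i ^ k - φ j ^ k) / (π i - φ j)) :
    L.rank ≤ ∑ k ∈ Finset.range (h + 1), (Γ k).rank * (Ξ k).rank :=
  polynomial_loewner_rank_le_general M N m n h Γ π φ L Ξ hL hΞ
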